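/- arXiv:0706.2661 — 4 statements merged into one kernel-verified Lean document; each statement's English description precedes it below -/
import Mathlib

section
/- Let Λ be a measurable space and let μ₀, μ₁, μ₊, μ₋ be probability measures on Λ satisfying μ₀ + μ₁ = μ₊ + μ₋. Then there exist i ∈ {0,1} and j ∈ {+,−} such that μ_i and μ_j are NOT mutually singular. (This is the mathematical core of Theorem 1: in the steering scenario with the maximally entangled state, local causality forces (1/2)p(λ|P₀)+(1/2)p(λ|P₁) = (1/2)p(λ|P₊)+(1/2)p(λ|P₋), and hence the epistemic states of at least one pair of distinct quantum states among {|0⟩,|1⟩} and {|+⟩,|−⟩} must overlap, so any ψ-ontic ontological model reproducing the quantum statistics violates locality.) -/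
open MeasureTheory

/-! μ₀ ≤ μ₀ + μ₁ = μ₊ + μ₋, so μ₀ is absolutely continuous with respect to μ₊ + μ₋. If μ₀ were
singular to both μ₊ and μ₋ it would be singular to their sum as well, and a measure that is both
absolutely continuous and singular with respect to the same measure vanishes, contradicting
μ₀(Λ) = 1. -/

namespace MeasureTheory.Measure

variable {α : Type*} [MeasurableSpace α] {μ ν₁ ν₂ : Measure α}

theorem not_mutuallySingular_or_of_absolutelyContinuous_add (hμ : μ ≠ 0) (h : μ ≪ ν₁ + ν₂) :
    ¬ μ ⟂ₘ ν₁ ∨ ¬ μ ⟂ₘ ν₂ := by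
  by_contra! hsing
  exact hμ <| eq_zero_of_absolutelyContinuous_of_mutuallySingular h
    (hsing.1.add_right hsing.2)

end MeasureTheory.Measure

theorem exists_not_mutuallySingular_of_mixture_eq_general {Λ : Type*} [MeasurableSpace Λ]
    (μ₀ μ₁ μp μm : Measure Λ)
    [IsProbabilityMeasure μ₀]
    (h : μ₀ + μ₁ = μp + μm) :
    ¬ (μ₀.MutuallySingular μp) ∨ ¬ (μ₀.MutuallySingular μm) ∨
    ¬ (μ₁.MutuallySingular μp) ∨ ¬ (μ₁.MutuallySingular μm) := by
  have hac : μ₀ ≪ μp + μm := h ▸ Measure.AbsolutelyContinuous.rfl.add_right μ₁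
  exact (Measure.not_mutuallySingular_or_of_absolutelyContinuous_add
    (IsProbabilityMeasure.ne_zero μ₀) hac).imp_right Or.inl

/-- **Core of Theorem 1 (ψ-ontic models are nonlocal).** If probability measures
μ₀, μ₁, μ₊, μ₋ on an ontic state space Λ satisfy μ₀ + μ₁ = μ₊ + μ₋ (as forced by local
causality in the steering scenario), then at least one of the pairs (μ₀,μ₊), (μ₀,μ₋),
(μ₁,μ₊), (μ₁,μ₋) fails to be mutually singular, i.e. the epistemic states of some pair of
distinct quantum states among {|0⟩,|1⟩,|+⟩,|−⟩} overlap. -/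
theorem exists_not_mutuallySingular_of_mixture_eq {Λ : Type*} [MeasurableSpace Λ]
    (μ₀ μ₁ μp μm : Measure Λ)
    [IsProbabilityMeasure μ₀] [IsProbabilityMeasure μ₁]
    [IsProbabilityMeasure μp] [IsProbabilityMeasure μm]
    (h : μ₀ + μ₁ = μp + μm) :
    ¬ (μ₀.MutuallySingular μp) ∨ ¬ (μ₀.MutuallySingular μm) ∨
    ¬ (μ₁.MutuallySingular μp) ∨ ¬ (μ₁.MutuallySingular μm) :=
  exists_not_mutuallySingular_of_mixture_eq_general μ₀ μ₁ μp μm h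
end

section
/- Let ψ, φ ∈ ℝ³ be unit vectors and let σ be the surface measure on the unit sphere S² ⊂ ℝ³ (total measure 4π). Then (1/π) ∫_{S²} 1_{{φ·λ > 0}}(λ) · max(ψ·λ, 0) dσ(λ) = (1 + ψ·φ)/2. (This shows that the Kochen–Specker model reproduces the quantum Born-rule statistics, since (1 + ψ·φ)/2 = |⟨ψ|φ⟩|² for the quantum states with Bloch vectors ψ and φ.) -/
/-!
Write `max t 0 = (t + |t|) / 2` and `ψ = ⟪ψ, φ⟫ φ + w` with `w ⊥ φ`. The surface measure is
invariant under linear isometries. The reflection in `w^⊥` preserves the hemisphere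
`{λ | 0 < ⟪φ, λ⟫}` and negates `⟪w, λ⟫`, so `w` contributes nothing; the antipodal map swaps
the two open hemispheres, whose common boundary is null, so each carries half of the integral of
an even function. Hence the integral equals `(1 + ⟪ψ, φ⟫) / 4 · ∫ |⟪φ, λ⟫| dσ`. Finally
`∫_{S²} |⟪φ, λ⟫| dσ = 2π` by polar coordinates applied to `|x₀| exp (-‖x‖²)`, whose integral
over `ℝ³` factorises as `1 · √π · √π`.
-/

open MeasureTheory Metric Real

abbrev S2 : Set (EuclideanSpace ℝ (Fin 3)) := Metric.sphere (0 : EuclideanSpace ℝ (Fin 3)) 1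

/-- `Measure.toSphere` is normalised so that the total mass is `3 · vol (ball 0 1) = 4π`. -/
noncomputable def sphereMeasure : Measure (S2 : Set (EuclideanSpace ℝ (Fin 3))) :=
  (volume : Measure (EuclideanSpace ℝ (Fin 3))).toSphere

open Set
open scoped RealInnerProductSpace Pointwise

namespace MeasureTheory.Measure

section NormedSpace

variable {E : Type*} [NormedAddCommGroup E] [NormedSpace ℝ E] [MeasurableSpace E] [BorelSpace E]

theorem map_map_coe_toSphere_of_measurePreserving (μ : Measure E) (e : E ≃ₗᵢ[ℝ] E)
    (he : MeasurePreserving e μ μ) :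
    (μ.toSphere.map ((↑) : sphere (0 : E) 1 → E)).map e = μ.toSphere.map (↑) := by
  have hval : Measurable ((↑) : sphere (0 : E) 1 → E) := measurable_subtype_coe
  have he_meas : Measurable e := e.continuous.measurable
  ext s hs
  rw [map_apply he_meas hs, map_apply hval (hs.preimage he_meas), map_apply hval hs,
    toSphere_apply' _ (hval (hs.preimage he_meas)), toSphere_apply' _ (hval hs),
    Subtype.image_preimage_coe, Subtype.image_preimage_coe]
  have hcone : Ioo (0 : ℝ) 1 • (sphere (0 : E) 1 ∩ e ⁻¹' s)
      = e ⁻¹' (Ioo (0 : ℝ) 1 • (sphere (0 : E) 1 ∩ s)) := by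
    ext x
    simp only [Set.mem_smul, mem_inter_iff, mem_preimage, mem_sphere_zero_iff_norm]
    constructor
    · rintro ⟨r, hr, y, ⟨hy, hys⟩, rfl⟩
      exact ⟨r, hr, e y, ⟨by rwa [e.norm_map], hys⟩, by rw [map_smul]⟩
    · rintro ⟨r, hr, z, ⟨hz, hzs⟩, hx⟩
      refine ⟨r, hr, e.symm z, ⟨by rwa [e.symm.norm_map], by simpa using hzs⟩, ?_⟩
      rw [← map_smul, hx, e.symm_apply_apply]
  rw [hcone, he.measure_preimage_emb e.toHomeomorph.measurableEmbedding]

theorem integral_toSphere_comp_linearIsometryEquiv (μ : Measure E) (e : E ≃ₗᵢ[ℝ] E)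
    (he : MeasurePreserving e μ μ) (f : E → ℝ) :
    ∫ l, f (e l) ∂μ.toSphere = ∫ l, f l ∂μ.toSphere := by
  have hval :=
    MeasurableEmbedding.subtype_coe (isClosed_sphere (x := (0 : E)) (ε := 1)).measurableSet
  calc ∫ l, f (e l) ∂μ.toSphere = ∫ x, f (e x) ∂μ.toSphere.map (↑) :=
        (hval.integral_map (fun x => f (e x))).symm
    _ = ∫ x, f x ∂(μ.toSphere.map (↑)).map e :=
        (e.toHomeomorph.measurableEmbedding.integral_map f).symm
    _ = ∫ l, f l ∂μ.toSphere := by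
        rw [map_map_coe_toSphere_of_measurePreserving μ e he, hval.integral_map]

variable [FiniteDimensional ℝ E]

theorem _root_.Continuous.integrable_toSphere (μ : Measure E) [μ.IsAddHaarMeasure] {g : E → ℝ}
    (hg : Continuous g) : Integrable (fun l : sphere (0 : E) 1 => g l) μ.toSphere :=
  (hg.comp continuous_subtype_val).integrable_of_hasCompactSupport (.of_compactSpace _)

theorem integral_eq_integral_toSphere_mul_integral_Ioi [Nontrivial E] (μ : Measure E)
    [μ.IsAddHaarMeasure] (f : E → ℝ) (g : sphere (0 : E) 1 → ℝ) (h : ℝ → ℝ)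
    (hfg : ∀ (l : sphere (0 : E) 1) (r : ℝ), 0 < r → f (r • (l : E)) = g l * h r) :
    ∫ x, f x ∂μ = (∫ l, g l ∂μ.toSphere) * ∫ r in Ioi 0, r ^ (Module.finrank ℝ E - 1) * h r := by
  have hf : ∀ x : ({(0 : E)}ᶜ : Set E),
      g (homeomorphUnitSphereProd E x).1 * h (homeomorphUnitSphereProd E x).2 = f x := by
    intro x
    rw [← hfg _ _ (homeomorphUnitSphereProd E x).2.2]
    congr 1
    have := congrArg Subtype.val ((homeomorphUnitSphereProd E).symm_apply_apply x)
    rwa [homeomorphUnitSphereProd_symm_apply_coe] at this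
  calc ∫ x, f x ∂μ = ∫ x : ({(0 : E)}ᶜ : Set E), f x ∂μ.comap (↑) := by
        rw [integral_subtype_comap (measurableSet_singleton _).compl, restrict_compl_singleton]
    _ = ∫ p : sphere (0 : E) 1 × Ioi (0 : ℝ), g p.1 * h p.2
          ∂μ.toSphere.prod (volumeIoiPow (Module.finrank ℝ E - 1)) := by
        simp only [← hf]
        exact μ.measurePreserving_homeomorphUnitSphereProd.integral_comp
          (Homeomorph.measurableEmbedding _) (fun p => g p.1 * h p.2)
    _ = _ := by
        rw [integral_prod_mul g (fun r : Ioi (0 : ℝ) => h r), volumeIoiPow,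
          integral_withDensity_eq_integral_toReal_smul (by fun_prop) (by simp),
          integral_subtype_comap measurableSet_Ioi
            (fun r : ℝ => (ENNReal.ofReal (r ^ _)).toReal • h r)]
        congr 1
        refine setIntegral_congr_fun measurableSet_Ioi fun r hr => ?_
        rw [ENNReal.toReal_ofReal (pow_nonneg hr.out.le _), smul_eq_mul]

end NormedSpace

section InnerProductSpace

variable {E : Type*} [NormedAddCommGroup E] [InnerProductSpace ℝ E] [MeasurableSpace E]
  [BorelSpace E] [FiniteDimensional ℝ E]

theorem toSphere_setOf_inner_eq_zero (μ : Measure E) [μ.IsAddHaarMeasure] {φ : E}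
    (hφ : φ ≠ 0) : μ.toSphere {l | ⟪φ, (l : E)⟫ = 0} = 0 := by
  have hmeas : MeasurableSet {l : sphere (0 : E) 1 | ⟪φ, (l : E)⟫ = 0} :=
    (isClosed_eq (by fun_prop) continuous_const).measurableSet
  rw [toSphere_apply' _ hmeas, mul_eq_zero]
  right
  refine measure_mono_null ?_ (μ.addHaar_submodule (ℝ ∙ φ)ᗮ ?_)
  · rintro _ ⟨r, -, _, ⟨l, hl, rfl⟩, rfl⟩
    rw [SetLike.mem_coe, Submodule.mem_orthogonal_singleton_iff_inner_right, inner_smul_right,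
      hl, mul_zero]
  · rwa [Ne, Submodule.orthogonal_eq_top_iff, Submodule.span_singleton_eq_bot]

theorem integral_toSphere_indicator_pos_inner_of_even {φ : E} (hφ : φ ≠ 0) {g : E → ℝ}
    (hg : Integrable (fun l : sphere (0 : E) 1 => g l) (volume : Measure E).toSphere)
    (heven : ∀ x, g (-x) = g x) :
    ∫ l, {x | 0 < ⟪φ, x⟫}.indicator g l ∂(volume : Measure E).toSphere
      = (∫ l, g l ∂(volume : Measure E).toSphere) / 2 := by
  have hint : ∀ s : Set E, MeasurableSet s →
      Integrable (fun l : sphere (0 : E) 1 => s.indicator g l) (volume : Measure E).toSphere :=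
    fun s hs => hg.indicator (hs.preimage measurable_subtype_coe)
  have hneg : ∀ x, {x | 0 < ⟪φ, x⟫}.indicator g (LinearIsometryEquiv.neg ℝ x)
      = {x | ⟪φ, x⟫ < 0}.indicator g x := fun x => by
    simp [indicator_apply, inner_neg_right, heven]
  have hswap := integral_toSphere_comp_linearIsometryEquiv volume _
    (LinearIsometryEquiv.neg ℝ).measurePreserving ({x : E | 0 < ⟪φ, x⟫}.indicator g)
  simp only [hneg] at hswap
  have hsplit : (fun l : sphere (0 : E) 1 => {x | 0 < ⟪φ, x⟫}.indicator g l
      + {x | ⟪φ, x⟫ < 0}.indicator g l) =ᵐ[(volume : Measure E).toSphere] fun l => g l := by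
    filter_upwards [measure_eq_zero_iff_ae_notMem.1 (toSphere_setOf_inner_eq_zero volume hφ)]
      with l hl
    rcases lt_or_gt_of_ne hl with h | h <;> simp [h, h.not_gt]
  rw [← integral_congr_ae hsplit,
    integral_add (hint _ (measurableSet_lt measurable_const (by fun_prop)))
      (hint _ (measurableSet_lt (by fun_prop) measurable_const)), hswap]
  ring

theorem integral_toSphere_indicator_pos_inner_inner_eq_zero {φ w : E} (hw : ⟪w, φ⟫ = 0) :
    ∫ l, {x | 0 < ⟪φ, x⟫}.indicator (fun x => ⟪w, x⟫) l ∂(volume : Measure E).toSphere = 0 := by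
  set R := (ℝ ∙ w)ᗮ.reflection
  have hRφ : R φ = φ := Submodule.reflection_mem_subspace_eq_self
    (Submodule.mem_orthogonal_singleton_iff_inner_right.2 hw)
  have hR : ∀ x, {x | 0 < ⟪φ, x⟫}.indicator (fun x => ⟪w, x⟫) (R x)
      = -{x | 0 < ⟪φ, x⟫}.indicator (fun x => ⟪w, x⟫) x := by
    intro x
    have hφx : ⟪φ, R x⟫ = ⟪φ, x⟫ := by rw [← hRφ, R.inner_map_map, hRφ]
    have hwx : ⟪w, R x⟫ = -⟪w, x⟫ := by
      have h := R.inner_map_map w x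
      rw [Submodule.reflection_orthogonalComplement_singleton_eq_neg, inner_neg_left] at h
      linarith
    simp only [indicator_apply, mem_ofPred_eq, hφx, hwx]
    split_ifs <;> simp
  have h := integral_toSphere_comp_linearIsometryEquiv volume R R.measurePreserving
    ({x : E | 0 < ⟪φ, x⟫}.indicator fun x => ⟪w, x⟫)
  simp only [hR, integral_neg] at h
  linarith

theorem integral_toSphere_indicator_pos_inner_inner {φ : E} (hφ : ‖φ‖ = 1) (ψ : E) :
    ∫ l, {x | 0 < ⟪φ, x⟫}.indicator (fun x => ⟪ψ, x⟫) l ∂(volume : Measure E).toSphere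
      = ⟪ψ, φ⟫ *
        ∫ l, {x | 0 < ⟪φ, x⟫}.indicator (fun x => ⟪φ, x⟫) l ∂(volume : Measure E).toSphere := by
  set w := ψ - ⟪ψ, φ⟫ • φ
  have hw : ⟪w, φ⟫ = 0 := by simp [w, inner_sub_left, real_inner_smul_left, hφ]
  have hψ : ∀ x, {x | 0 < ⟪φ, x⟫}.indicator (fun x => ⟪ψ, x⟫) x
      = ⟪ψ, φ⟫ * {x | 0 < ⟪φ, x⟫}.indicator (fun x => ⟪φ, x⟫) x
        + {x | 0 < ⟪φ, x⟫}.indicator (fun x => ⟪w, x⟫) x := by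
    intro x
    simp only [indicator_apply, w, inner_sub_left, real_inner_smul_left]
    split_ifs <;> ring
  have hH : MeasurableSet {x : E | 0 < ⟪φ, x⟫} := measurableSet_lt measurable_const (by fun_prop)
  have hint : ∀ v : E, Integrable (fun l : sphere (0 : E) 1 =>
      {x | 0 < ⟪φ, x⟫}.indicator (fun x => ⟪v, x⟫) l) (volume : Measure E).toSphere := fun v =>
    ((by fun_prop : Continuous fun x : E => ⟪v, x⟫).integrable_toSphere _).indicator
      (hH.preimage measurable_subtype_coe)
  simp only [hψ]
  rw [integral_add ((hint φ).const_mul _) (hint w), integral_const_mul,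
    integral_toSphere_indicator_pos_inner_inner_eq_zero hw, add_zero]

theorem integral_toSphere_abs_inner_eq {u v : E} (h : ‖u‖ = ‖v‖) :
    ∫ l, |⟪u, (l : E)⟫| ∂(volume : Measure E).toSphere
      = ∫ l, |⟪v, (l : E)⟫| ∂(volume : Measure E).toSphere := by
  set R := (ℝ ∙ (u - v))ᗮ.reflection
  have hR : ∀ x, |⟪v, R x⟫| = |⟪u, x⟫| := fun x => by
    rw [← Submodule.reflection_sub h, R.inner_map_map]
  simpa only [hR] using
    integral_toSphere_comp_linearIsometryEquiv volume R R.measurePreserving (fun x => |⟪v, x⟫|)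

theorem integral_toSphere_indicator_pos_inner_max_inner {φ ψ : E} (hφ : ‖φ‖ = 1)
    (hψ : ‖ψ‖ = 1) :
    ∫ l, {x | 0 < ⟪φ, x⟫}.indicator (fun x => max ⟪ψ, x⟫ 0) l ∂(volume : Measure E).toSphere
      = (1 + ⟪ψ, φ⟫) / 4 * ∫ l, |⟪φ, (l : E)⟫| ∂(volume : Measure E).toSphere := by
  have hφ0 : φ ≠ 0 := by rintro rfl; simp at hφ
  have hH : MeasurableSet {x : E | 0 < ⟪φ, x⟫} := measurableSet_lt measurable_const (by fun_prop)
  have hint : ∀ {g : E → ℝ}, Continuous g → Integrable (fun l : sphere (0 : E) 1 =>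
      {x | 0 < ⟪φ, x⟫}.indicator g l) (volume : Measure E).toSphere := fun hg =>
    (hg.integrable_toSphere _).indicator (hH.preimage measurable_subtype_coe)
  have hhalf : ∀ v : E, ∫ l, {x | 0 < ⟪φ, x⟫}.indicator (fun x => |⟪v, x⟫|) l
      ∂(volume : Measure E).toSphere = (∫ l, |⟪v, (l : E)⟫| ∂(volume : Measure E).toSphere) / 2 :=
    fun v => integral_toSphere_indicator_pos_inner_of_even hφ0
      ((by fun_prop : Continuous fun x : E => |⟪v, x⟫|).integrable_toSphere _)
      fun x => by rw [inner_neg_right, abs_neg]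
  have hmax : ∀ x, {x | 0 < ⟪φ, x⟫}.indicator (fun x => max ⟪ψ, x⟫ 0) x
      = ({x | 0 < ⟪φ, x⟫}.indicator (fun x => ⟪ψ, x⟫) x
        + {x | 0 < ⟪φ, x⟫}.indicator (fun x => |⟪ψ, x⟫|) x) / 2 := by
    intro x
    simp only [indicator_apply]
    split_ifs
    · rcases le_total ⟪ψ, x⟫ 0 with h | h
      · rw [max_eq_right h, abs_of_nonpos h]; ring
      · rw [max_eq_left h, abs_of_nonneg h]; ring
    · simp
  have hφ_abs : {x | 0 < ⟪φ, x⟫}.indicator (fun x => ⟪φ, x⟫)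
      = {x | 0 < ⟪φ, x⟫}.indicator (fun x => |⟪φ, x⟫|) :=
    indicator_congr fun _ h => (abs_of_pos h).symm
  simp only [hmax, integral_div]
  rw [integral_add (hint (by fun_prop)) (hint (by fun_prop)),
    integral_toSphere_indicator_pos_inner_inner hφ, hφ_abs, hhalf, hhalf,
    integral_toSphere_abs_inner_eq (hψ.trans hφ.symm)]
  ring

end InnerProductSpace

end MeasureTheory.Measure

open MeasureTheory.Measure

theorem integral_Ioi_pow_mul_exp_neg_sq (k : ℕ) :
    ∫ r in Ioi (0 : ℝ), r ^ k * exp (-r ^ 2) = Gamma ((k + 1) / 2) / 2 := by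
  have h := integral_rpow_mul_exp_neg_mul_rpow two_pos
    (neg_one_lt_zero.trans_le (Nat.cast_nonneg k)) one_pos
  simp only [rpow_natCast, rpow_two, one_rpow, one_mul, neg_mul] at h
  rw [h, one_div_mul_eq_div]

theorem integral_abs_mul_exp_neg_sq : ∫ t : ℝ, |t| * exp (-t ^ 2) = 1 := by
  have h := integral_comp_abs (f := fun t => t * exp (-t ^ 2))
  have h1 := integral_Ioi_pow_mul_exp_neg_sq 1
  simp only [sq_abs] at h
  simp only [pow_one] at h1
  rw [h, h1]
  norm_num

theorem EuclideanSpace.integral_abs_apply_zero_mul_exp_neg_norm_sq (n : ℕ) :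
    ∫ x : EuclideanSpace ℝ (Fin (n + 1)), |x 0| * exp (-‖x‖ ^ 2) = √π ^ n := by
  have hprod : ∀ y : Fin (n + 1) → ℝ, |y 0| * exp (-∑ i, y i ^ 2)
      = ∏ i, (Fin.cons (fun t => |t| * exp (-t ^ 2)) (fun _ t => exp (-t ^ 2)) :
          Fin (n + 1) → ℝ → ℝ) i (y i) := by
    intro y
    rw [Fin.prod_univ_succ, Fin.sum_univ_succ, neg_add, exp_add, ← Finset.sum_neg_distrib,
      exp_sum]
    simp only [Fin.cons_zero, Fin.cons_succ]
    ring
  have hgauss : ∫ t : ℝ, exp (-t ^ 2) = √π := by simpa using integral_gaussian 1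
  calc ∫ x : EuclideanSpace ℝ (Fin (n + 1)), |x 0| * exp (-‖x‖ ^ 2)
      = ∫ y : Fin (n + 1) → ℝ, |y 0| * exp (-∑ i, y i ^ 2) := by
        rw [← (PiLp.volume_preserving_toLp (Fin (n + 1))).integral_comp
          (MeasurableEquiv.toLp 2 _).measurableEmbedding]
        simp [EuclideanSpace.norm_sq_eq]
    _ = √π ^ n := by
        simp only [hprod]
        rw [integral_fintype_prod_volume_eq_prod, Fin.prod_univ_succ]
        simp [integral_abs_mul_exp_neg_sq, hgauss]

theorem EuclideanSpace.integral_toSphere_abs_inner {n : ℕ} {v : EuclideanSpace ℝ (Fin (n + 1))}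
    (hv : ‖v‖ = 1) :
    ∫ l, |⟪v, (l : EuclideanSpace ℝ (Fin (n + 1)))⟫|
        ∂(volume : Measure (EuclideanSpace ℝ (Fin (n + 1)))).toSphere
      = 2 * √π ^ n / Gamma ((n + 2) / 2) := by
  have he : ‖EuclideanSpace.single (0 : Fin (n + 1)) (1 : ℝ)‖ = 1 := by simp
  have hpolar := integral_eq_integral_toSphere_mul_integral_Ioi volume
    (fun x : EuclideanSpace ℝ (Fin (n + 1)) => |x 0| * exp (-‖x‖ ^ 2))
    (fun l => |(l : EuclideanSpace ℝ (Fin (n + 1))) 0|) (fun r => r * exp (-r ^ 2))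
    fun l r hr => by
      simp only [PiLp.smul_apply, smul_eq_mul, abs_mul, abs_of_pos hr, norm_smul,
        norm_of_nonneg hr.le, norm_eq_of_mem_sphere l]
      ring_nf
  have hradial : ∫ r in Ioi (0 : ℝ), r ^ n * (r * exp (-r ^ 2)) = Gamma ((n + 2) / 2) / 2 := by
    simp only [← mul_assoc, ← pow_succ, integral_Ioi_pow_mul_exp_neg_sq]
    push_cast
    ring_nf
  rw [EuclideanSpace.integral_abs_apply_zero_mul_exp_neg_norm_sq, finrank_euclideanSpace_fin,
    Nat.add_sub_cancel, hradial] at hpolar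
  have hΓ : 0 < Gamma ((n + 2) / 2) := Gamma_pos_of_pos (by positivity)
  rw [integral_toSphere_abs_inner_eq (hv.trans he.symm)]
  simp only [EuclideanSpace.inner_single_left, map_one, one_mul]
  field_simp
  linarith

/-- **The Kochen–Specker model reproduces the Born rule.** For unit Bloch vectors ψ, φ ∈ ℝ³,
(1/π) ∫_{S²} 1_{φ·λ>0}(λ) · max(ψ·λ, 0) dσ(λ) = (1 + ψ·φ)/2 = |⟨ψ|φ⟩|². -/
theorem kochenSpecker_born_rule (ψ φ : EuclideanSpace ℝ (Fin 3))
    (hψ : ‖ψ‖ = 1) (hφ : ‖φ‖ = 1) :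
    (1 / π) * ∫ l : S2,
        Set.indicator {l : S2 | 0 < (inner ℝ φ (l : EuclideanSpace ℝ (Fin 3)) : ℝ)}
          (fun _ => (1 : ℝ)) l
        * max (inner ℝ ψ (l : EuclideanSpace ℝ (Fin 3)) : ℝ) 0 ∂sphereMeasure
      = (1 + (inner ℝ ψ φ : ℝ)) / 2 := by
  have hintegrand : ∀ l : S2,
      Set.indicator {l : S2 | 0 < ⟪φ, (l : EuclideanSpace ℝ (Fin 3))⟫} (fun _ => (1 : ℝ)) l
        * max ⟪ψ, (l : EuclideanSpace ℝ (Fin 3))⟫ 0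
      = {x | 0 < ⟪φ, x⟫}.indicator (fun x => max ⟪ψ, x⟫ 0) (l : EuclideanSpace ℝ (Fin 3)) :=
    fun l => by simp [indicator_apply]
  simp only [hintegrand]
  rw [sphereMeasure, integral_toSphere_indicator_pos_inner_max_inner hφ hψ,
    EuclideanSpace.integral_toSphere_abs_inner (n := 2) hφ]
  norm_num [Gamma_two, sq_sqrt pi_pos.le]
  field_simp
  ring
end

section
/- Let ψ, φ ∈ ℝ³ be unit vectors with ψ·φ > −1, and let σ be the surface measure on the unit sphere S² ⊂ ℝ³. Then σ({λ ∈ S² : ψ·λ > 0 and φ·λ > 0}) > 0; in particular the densities λ ↦ (1/π)max(ψ·λ,0) and λ ↦ (1/π)max(φ·λ,0) are simultaneously strictly positive on a set of positive σ-measure. (This shows that the Kochen–Specker model is ψ-epistemic: the epistemic states of any two nonorthogonal quantum states — i.e. those whose Bloch vectors are not antipodal — have overlapping supports.) -/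
open MeasureTheory Metric Real

open scoped RealInnerProductSpace

section InnerProductSpace

variable {E : Type*} [NormedAddCommGroup E] [InnerProductSpace ℝ E]

theorem inner_add_right_pos_of_norm_eq_one {u v : E} (hu : ‖u‖ = 1) (huv : -1 < ⟪u, v⟫) :
    0 < ⟪u, u + v⟫ := by
  rw [inner_add_right, real_inner_self_eq_norm_sq, hu]
  linarith

theorem exists_mem_sphere_inner_pos_of_neg_one_lt_inner {u v : E} (hu : ‖u‖ = 1) (hv : ‖v‖ = 1)
    (huv : -1 < ⟪u, v⟫) : ∃ w ∈ sphere (0 : E) 1, 0 < ⟪u, w⟫ ∧ 0 < ⟪v, w⟫ := by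
  have hu_pos : 0 < ⟪u, u + v⟫ := inner_add_right_pos_of_norm_eq_one hu huv
  have hv_pos : 0 < ⟪v, u + v⟫ := by
    rw [add_comm]
    exact inner_add_right_pos_of_norm_eq_one hv (real_inner_comm u v ▸ huv)
  have hne : u + v ≠ 0 := fun h ↦ by simp [h] at hu_pos
  have hnorm : ‖u + v‖ ≠ 0 := norm_ne_zero_iff.2 hne
  have hw : ‖u + v‖⁻¹ • (u + v) ∈ sphere (0 : E) 1 := by
    rw [mem_sphere_zero_iff_norm, norm_smul, norm_inv, norm_norm, inv_mul_cancel₀ hnorm]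
  have hinv : 0 < ‖u + v‖⁻¹ := inv_pos.2 (norm_pos_iff.2 hne)
  refine ⟨_, hw, ?_, ?_⟩
  · rw [real_inner_smul_right]
    exact mul_pos hinv hu_pos
  · rw [real_inner_smul_right]
    exact mul_pos hinv hv_pos

end InnerProductSpace

instance : sphereMeasure.IsOpenPosMeasure :=
  Measure.toSphere.instIsOpenPosMeasure volume

/-- **The Kochen–Specker model is ψ-epistemic.** For unit Bloch vectors ψ, φ ∈ ℝ³ with
ψ·φ > −1 (i.e. nonorthogonal qubit states), the set where both epistemic densities
(1/π)max(ψ·λ,0) and (1/π)max(φ·λ,0) are strictly positive—namely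
{λ ∈ S² : ψ·λ > 0 and φ·λ > 0}—has positive surface measure. -/
theorem kochenSpecker_psi_epistemic (ψ φ : EuclideanSpace ℝ (Fin 3))
    (hψ : ‖ψ‖ = 1) (hφ : ‖φ‖ = 1) (h : (-1 : ℝ) < (inner ℝ ψ φ : ℝ)) :
    0 < sphereMeasure {l : S2 |
        0 < (inner ℝ ψ (l : EuclideanSpace ℝ (Fin 3)) : ℝ) ∧
        0 < (inner ℝ φ (l : EuclideanSpace ℝ (Fin 3)) : ℝ)} := by
  obtain ⟨w, hw, hψw, hφw⟩ := exists_mem_sphere_inner_pos_of_neg_one_lt_inner hψ hφ h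
  have hopen : IsOpen (((↑) : S2 → EuclideanSpace ℝ (Fin 3)) ⁻¹'
      ({x | 0 < ⟪ψ, x⟫} ∩ {x | 0 < ⟪φ, x⟫})) :=
    ((isOpen_lt continuous_const (continuous_const.inner continuous_id)).inter
      (isOpen_lt continuous_const (continuous_const.inner continuous_id))).preimage
      continuous_subtype_val
  exact hopen.measure_pos sphereMeasure ⟨⟨w, hw⟩, hψw, hφw⟩
end

section
/- Let φ, w ∈ ℝ³ be unit vectors and let σ be the surface measure on the unit sphere S² ⊂ ℝ³ (total measure 4π). Then (1/(4π)) ∫_{S²} 1_{{φ·(w + λ) > 0}}(λ) dσ(λ) = (1 + φ·w)/2. (This is the computation showing both that the Bell–Mermin model reproduces the quantum Born rule p(φ|ψ) = |⟨ψ|φ⟩|² = (1 + φ·ψ)/2, taking w = ψ, and that marginalizing the Bell–Mermin indicator function over the hidden variable λ'' recovers the indicator function (1 + φ·λ')/2 of the Beltrametti–Bugajski model, taking w = λ'.) -/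
open MeasureTheory Metric Real

/-!
The event `φ · (w + λ) > 0` is the spherical cap `{λ | -φ · w < φ · λ}`, so the theorem is
Archimedes' hat-box theorem: the cap `{l ∈ S² | c < φ · l}` has area `2π (1 - c)`.

By the definition of `Measure.toSphere`, the area of a cap is three times the volume of the cone
it spans in the unit ball. For `0 ≤ c` that cone is sliced perpendicular to `φ` into discs, of
squared radius `t² / c² - t²` at height `0 < t ≤ c` and `1 - t²` at height `c < t < 1`, with
total volume `2π (1 - c) / 3`. For `c < 0` the cap is the complement of the closed cap
`{-c ≤ (-φ) · l}`, whose area is squeezed between those of the open caps computed before.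
-/

open Set Module Filter Topology
open scoped ENNReal Pointwise

theorem lintegral_Ioc_ofReal_eq_ofReal_intervalIntegral {f : ℝ → ℝ} {a b : ℝ} (hab : a ≤ b)
    (hf : IntervalIntegrable f volume a b) (hf0 : ∀ t ∈ Ioc a b, 0 ≤ f t) :
    ∫⁻ t in Ioc a b, .ofReal (f t) = .ofReal (∫ t in a..b, f t) := by
  rw [intervalIntegral.integral_of_le hab, ofReal_integral_eq_lintegral_ofReal hf.1
    ((ae_restrict_iff' measurableSet_Ioc).2 (.of_forall hf0))]

theorem lintegral_Ioc_zero_sq_div_sq_sub_sq {c : ℝ} (hc0 : 0 ≤ c) (hc1 : c ≤ 1) :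
    ∫⁻ t in Ioc 0 c, .ofReal (π * (t ^ 2 / c ^ 2 - t ^ 2)) = .ofReal (π * (c - c ^ 3) / 3) := by
  rw [lintegral_Ioc_ofReal_eq_ofReal_intervalIntegral hc0
    ((by fun_prop : Continuous _).intervalIntegrable _ _)]
  · simp only [intervalIntegral.integral_const_mul, intervalIntegral.integral_sub,
      intervalIntegral.integral_div, IntervalIntegrable.div_const,
      intervalIntegral.intervalIntegrable_pow, integral_pow]
    rcases hc0.eq_or_lt with rfl | hc
    · simp
    congr 1
    field_simp
    ring
  · rintro t ⟨ht0, htc⟩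
    have ht : t ^ 2 ≤ t ^ 2 / c ^ 2 :=
      le_div_self (sq_nonneg t) (pow_pos (ht0.trans_le htc) 2) (pow_le_one₀ hc0 hc1)
    exact mul_nonneg pi_pos.le (sub_nonneg.2 ht)

theorem lintegral_Ioc_one_sub_sq {c : ℝ} (hc : -1 ≤ c) (hc1 : c ≤ 1) :
    ∫⁻ t in Ioc c 1, .ofReal (π * (1 - t ^ 2)) = .ofReal (π * (2 / 3 - c + c ^ 3 / 3)) := by
  rw [lintegral_Ioc_ofReal_eq_ofReal_intervalIntegral hc1
    ((by fun_prop : Continuous _).intervalIntegrable _ _)]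
  · simp only [intervalIntegral.integral_const_mul, intervalIntegral.integral_sub,
      intervalIntegrable_const, intervalIntegral.intervalIntegrable_pow, integral_pow,
      intervalIntegral.integral_const, smul_eq_mul]
    congr 1
    ring
  · rintro t ⟨hct, ht1⟩
    exact mul_nonneg pi_pos.le (by nlinarith)

theorem EuclideanSpace.volume_setOf_norm_sq_lt (a : ℝ) :
    volume {y : EuclideanSpace ℝ (Fin 2) | ‖y‖ ^ 2 < a} = .ofReal (π * a) := by
  have hball : {y : EuclideanSpace ℝ (Fin 2) | ‖y‖ ^ 2 < a} = ball 0 √a := by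
    ext y
    simp [Real.lt_sqrt (norm_nonneg y)]
  rw [hball, EuclideanSpace.volume_ball_fin_two, ← ENNReal.ofReal_pow (sqrt_nonneg a), sq_sqrt',
    ENNReal.ofReal_mul pi_pos.le, ENNReal.ofReal_max, ENNReal.ofReal_zero,
    max_eq_left zero_le, mul_comm]

/-- Cavalieri's principle for a solid of revolution about the first coordinate axis. -/
theorem EuclideanSpace.volume_setOf_apply_zero_norm_mem {n : ℕ} {S : Set (ℝ × ℝ)}
    (hS : MeasurableSet S) :
    volume {z : EuclideanSpace ℝ (Fin (n + 1)) | (z 0, ‖z‖) ∈ S}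
      = ∫⁻ t, volume {y : EuclideanSpace ℝ (Fin n) | (t, √(t ^ 2 + ‖y‖ ^ 2)) ∈ S} := by
  set T : Set (ℝ × EuclideanSpace ℝ (Fin n)) := {p | (p.1, √(p.1 ^ 2 + ‖p.2‖ ^ 2)) ∈ S}
  have hT : MeasurableSet T := hS.preimage (by fun_prop)
  have hsplit : MeasurePreserving (fun z : EuclideanSpace ℝ (Fin (n + 1)) =>
      (z 0, WithLp.toLp 2 (Fin.tail (WithLp.ofLp z)))) :=
    ((MeasurePreserving.id volume).prod (PiLp.volume_preserving_toLp (Fin n))).comp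
      ((volume_preserving_piFinSuccAbove (fun _ => ℝ) 0).comp
        (EuclideanSpace.volume_preserving_symm_measurableEquiv_toLp (Fin (n + 1))))
  have hpre : {z : EuclideanSpace ℝ (Fin (n + 1)) | (z 0, ‖z‖) ∈ S}
      = (fun z : EuclideanSpace ℝ (Fin (n + 1)) =>
          (z 0, WithLp.toLp 2 (Fin.tail (WithLp.ofLp z)))) ⁻¹' T := by
    ext z
    simp only [T, mem_ofPred_eq, mem_preimage, EuclideanSpace.norm_eq, Fin.sum_univ_succ]
    rw [sq_sqrt (by positivity), Real.norm_eq_abs, sq_abs]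
    rfl
  rw [hpre, hsplit.measure_preimage hT.nullMeasurableSet, Measure.volume_eq_prod,
    Measure.prod_apply hT]
  rfl

/-- The pairs `(⟪φ, x⟫, ‖x‖)` of the points `x ≠ 0` of the unit ball with `c ‖x‖ < ⟪φ, x⟫`. -/
def coneProfile (c : ℝ) : Set (ℝ × ℝ) := {p | 0 < p.2 ∧ p.2 < 1 ∧ c * p.2 < p.1}

theorem measurableSet_coneProfile (c : ℝ) : MeasurableSet (coneProfile c) :=
  (measurableSet_lt measurable_const measurable_snd).inter
    ((measurableSet_lt measurable_snd measurable_const).inter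
      (measurableSet_lt (by fun_prop) measurable_fst))

theorem volume_coneProfile_slice {c : ℝ} (hc0 : 0 ≤ c) (t : ℝ) :
    volume {y : EuclideanSpace ℝ (Fin 2) | (t, √(t ^ 2 + ‖y‖ ^ 2)) ∈ coneProfile c}
      = (Ioc 0 c).indicator (fun t => .ofReal (π * (t ^ 2 / c ^ 2 - t ^ 2))) t
        + (Ioc c 1).indicator (fun t => .ofReal (π * (1 - t ^ 2))) t := by
  rcases le_or_gt t 0 with ht0 | ht0
  · rw [indicator_of_notMem fun h => ht0.not_gt h.1,
      indicator_of_notMem fun h => (ht0.trans hc0).not_gt h.1, add_zero,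
      measure_eq_zero_iff_ae_notMem]
    exact .of_forall fun y ⟨_, _, hy⟩ => (mul_nonneg hc0 (sqrt_nonneg _)).not_gt (hy.trans_le ht0)
  have hr (y : EuclideanSpace ℝ (Fin 2)) : 0 < √(t ^ 2 + ‖y‖ ^ 2) := sqrt_pos.2 (by positivity)
  rcases le_or_gt t c with htc | htc
  · have hc : 0 < c := ht0.trans_le htc
    rw [indicator_of_mem (mem_Ioc.2 ⟨ht0, htc⟩), indicator_of_notMem fun h => htc.not_gt h.1,
      add_zero, ← EuclideanSpace.volume_setOf_norm_sq_lt]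
    congr 1 with y
    simp only [coneProfile, mem_ofPred_eq]
    rw [and_iff_right (hr y),
      and_iff_right_of_imp fun h => (mul_lt_iff_lt_one_right hc).1 (h.trans_le htc),
      ← lt_div_iff₀' hc, sqrt_lt' (div_pos ht0 hc), div_pow, lt_sub_iff_add_lt']
  · rw [indicator_of_notMem fun h => htc.not_ge h.2, zero_add]
    trans volume {y : EuclideanSpace ℝ (Fin 2) | ‖y‖ ^ 2 < 1 - t ^ 2}
    · congr 1 with y
      simp only [coneProfile, mem_ofPred_eq]
      rw [and_iff_right (hr y),
        and_iff_left_of_imp fun h => (mul_le_of_le_one_right hc0 h.le).trans_lt htc,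
        sqrt_lt' one_pos, one_pow, lt_sub_iff_add_lt']
    rw [EuclideanSpace.volume_setOf_norm_sq_lt]
    rcases le_or_gt t 1 with ht1 | ht1
    · rw [indicator_of_mem (mem_Ioc.2 ⟨htc, ht1⟩)]
    · rw [indicator_of_notMem fun h => ht1.not_ge h.2, ENNReal.ofReal_of_nonpos]
      exact mul_nonpos_of_nonneg_of_nonpos pi_pos.le (by nlinarith)

section InnerProductSpace

variable {E : Type*} [NormedAddCommGroup E] [InnerProductSpace ℝ E]

theorem Ioo_smul_image_coe_setOf_lt_inner (φ : E) (c : ℝ) :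
    Ioo (0 : ℝ) 1 • (((↑) : sphere (0 : E) 1 → E) '' {l | c < inner ℝ φ (l : E)})
      = {x : E | 0 < ‖x‖ ∧ ‖x‖ < 1 ∧ c * ‖x‖ < inner ℝ φ x} := by
  ext x
  constructor
  · rintro ⟨r, ⟨hr0, hr1⟩, _, ⟨l, hl, rfl⟩, rfl⟩
    simp only [mem_ofPred_eq] at hl ⊢
    rw [norm_smul, norm_eq_of_mem_sphere l, mul_one, norm_of_nonneg hr0.le,
      real_inner_smul_right, mul_comm c]
    exact ⟨hr0, hr1, mul_lt_mul_of_pos_left hl hr0⟩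
  · rintro ⟨hx0, hx1, hc⟩
    refine ⟨‖x‖, ⟨hx0, hx1⟩, ‖x‖⁻¹ • x, ⟨⟨‖x‖⁻¹ • x, ?_⟩, ?_, rfl⟩, ?_⟩
    · simp [norm_smul, hx0.ne']
    · simp only [mem_ofPred_eq, real_inner_smul_right]
      rwa [lt_inv_mul_iff₀ hx0, mul_comm]
    · simp [smul_smul, hx0.ne']

theorem exists_orthonormalBasis_apply_zero_eq [FiniteDimensional ℝ E] {n : ℕ}
    (hE : finrank ℝ E = n + 1) {φ : E} (hφ : ‖φ‖ = 1) :
    ∃ b : OrthonormalBasis (Fin (n + 1)) ℝ E, b 0 = φ := by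
  have hv : Orthonormal ℝ (({0} : Set (Fin (n + 1))).domRestrict fun _ => φ) :=
    ⟨fun _ => hφ, fun i j hij => (hij (Subsingleton.elim i j)).elim⟩
  obtain ⟨b, hb⟩ := hv.exists_orthonormalBasis_extension_of_card_eq (by simp [hE])
  exact ⟨b, hb 0 rfl⟩

variable [MeasurableSpace E] [BorelSpace E]

theorem measurableSet_setOf_lt_inner (φ : E) (c : ℝ) :
    MeasurableSet {l : sphere (0 : E) 1 | c < inner ℝ φ (l : E)} :=
  measurableSet_lt measurable_const (by fun_prop)

variable [FiniteDimensional ℝ E]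

theorem volume_setOf_inner_norm_mem {n : ℕ} (hE : finrank ℝ E = n + 1) {φ : E} (hφ : ‖φ‖ = 1)
    {S : Set (ℝ × ℝ)} (hS : MeasurableSet S) :
    volume {x : E | (inner ℝ φ x, ‖x‖) ∈ S}
      = ∫⁻ t, volume {y : EuclideanSpace ℝ (Fin n) | (t, √(t ^ 2 + ‖y‖ ^ 2)) ∈ S} := by
  obtain ⟨b, hb⟩ := exists_orthonormalBasis_apply_zero_eq hE hφ
  have hpre : {x : E | (inner ℝ φ x, ‖x‖) ∈ S} = b.repr ⁻¹' {z | (z 0, ‖z‖) ∈ S} := by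
    ext x
    simp [b.repr_apply_apply, hb]
  have hmeas : MeasurableSet {z : EuclideanSpace ℝ (Fin (n + 1)) | (z 0, ‖z‖) ∈ S} :=
    hS.preimage (by fun_prop)
  rw [hpre, b.measurePreserving_repr.measure_preimage hmeas.nullMeasurableSet,
    EuclideanSpace.volume_setOf_apply_zero_norm_mem hS]

theorem volume_cone_inter_ball (hE : finrank ℝ E = 3) {φ : E} (hφ : ‖φ‖ = 1) {c : ℝ}
    (hc0 : 0 ≤ c) (hc1 : c ≤ 1) :
    volume {x : E | 0 < ‖x‖ ∧ ‖x‖ < 1 ∧ c * ‖x‖ < inner ℝ φ x}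
      = .ofReal (2 * π / 3 * (1 - c)) := by
  have hcone_nonneg : 0 ≤ π * (c - c ^ 3) / 3 := by
    have : 0 ≤ c - c ^ 3 := by
      nlinarith [mul_nonneg (mul_nonneg hc0 (sub_nonneg.2 hc1)) (by linarith : 0 ≤ 1 + c)]
    positivity
  have hcap_nonneg : 0 ≤ π * (2 / 3 - c + c ^ 3 / 3) := by
    have : 0 ≤ 2 / 3 - c + c ^ 3 / 3 := by
      nlinarith [mul_nonneg (sq_nonneg (1 - c)) (by linarith : 0 ≤ 2 + c)]
    positivity
  change volume {x : E | (inner ℝ φ x, ‖x‖) ∈ coneProfile c} = _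
  rw [volume_setOf_inner_norm_mem (n := 2) hE hφ (measurableSet_coneProfile c)]
  simp_rw [volume_coneProfile_slice hc0]
  rw [lintegral_add_left ((Measurable.ennreal_ofReal (by fun_prop)).indicator measurableSet_Ioc),
    lintegral_indicator measurableSet_Ioc, lintegral_indicator measurableSet_Ioc,
    lintegral_Ioc_zero_sq_div_sq_sub_sq hc0 hc1, lintegral_Ioc_one_sub_sq (by linarith) hc1,
    ← ENNReal.ofReal_add hcone_nonneg hcap_nonneg]
  congr 1
  ring

theorem toSphere_univ_of_finrank_eq_three (hE : finrank ℝ E = 3) :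
    (volume : Measure E).toSphere univ = .ofReal (4 * π) := by
  rw [Measure.toSphere_apply_univ, InnerProductSpace.volume_ball_of_dim_odd (k := 1) hE, hE,
    ENNReal.ofReal_one, one_pow, one_mul, ← ENNReal.ofReal_natCast,
    ← ENNReal.ofReal_mul (by positivity)]
  congr 1
  norm_num [Nat.doubleFactorial]
  ring

theorem toSphere_setOf_lt_inner_of_nonneg (hE : finrank ℝ E = 3) {φ : E} (hφ : ‖φ‖ = 1) {c : ℝ}
    (hc0 : 0 ≤ c) (hc1 : c ≤ 1) :
    (volume : Measure E).toSphere {l | c < inner ℝ φ (l : E)} = .ofReal (2 * π * (1 - c)) := by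
  rw [Measure.toSphere_apply' _ (measurableSet_setOf_lt_inner φ c),
    Ioo_smul_image_coe_setOf_lt_inner, volume_cone_inter_ball hE hφ hc0 hc1, hE,
    ← ENNReal.ofReal_natCast, ← ENNReal.ofReal_mul (by positivity)]
  congr 1
  ring

theorem toSphere_setOf_le_inner (hE : finrank ℝ E = 3) {φ : E} (hφ : ‖φ‖ = 1) {d : ℝ}
    (hd0 : 0 < d) (hd1 : d ≤ 1) :
    (volume : Measure E).toSphere {l | d ≤ inner ℝ φ (l : E)} = .ofReal (2 * π * (1 - d)) := by
  refine le_antisymm ?_ ?_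
  · have hlim : Tendsto (fun d' : ℝ => ENNReal.ofReal (2 * π * (1 - d'))) (𝓝[<] d)
        (𝓝 (.ofReal (2 * π * (1 - d)))) :=
      ENNReal.tendsto_ofReal
        (((by fun_prop : Continuous fun d' : ℝ => 2 * π * (1 - d')).tendsto d).mono_left
          nhdsWithin_le_nhds)
    refine ge_of_tendsto hlim ?_
    filter_upwards [Ioo_mem_nhdsLT hd0] with d' hd'
    rw [← toSphere_setOf_lt_inner_of_nonneg hE hφ hd'.1.le (hd'.2.le.trans hd1)]
    exact measure_mono (ofPred_subset_ofPred.2 fun _ => hd'.2.trans_le)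
  · rw [← toSphere_setOf_lt_inner_of_nonneg hE hφ hd0.le hd1]
    exact measure_mono (ofPred_subset_ofPred.2 fun _ => le_of_lt)

theorem toSphere_setOf_lt_inner (hE : finrank ℝ E = 3) {φ : E} (hφ : ‖φ‖ = 1) {c : ℝ}
    (hc : -1 ≤ c) (hc1 : c ≤ 1) :
    (volume : Measure E).toSphere {l | c < inner ℝ φ (l : E)} = .ofReal (2 * π * (1 - c)) := by
  rcases le_or_gt 0 c with hc0 | hc0
  · exact toSphere_setOf_lt_inner_of_nonneg hE hφ hc0 hc1
  have hcompl : {l : sphere (0 : E) 1 | c < inner ℝ φ (l : E)}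
      = {l : sphere (0 : E) 1 | -c ≤ inner ℝ (-φ) (l : E)}ᶜ := by
    ext l
    simp [inner_neg_left]
  rw [hcompl, measure_compl (measurableSet_le measurable_const (by fun_prop)) (measure_ne_top _ _),
    toSphere_univ_of_finrank_eq_three hE,
    toSphere_setOf_le_inner hE (by rwa [norm_neg]) (neg_pos.2 hc0) (by linarith),
    ← ENNReal.ofReal_sub _ (mul_nonneg two_pi_pos.le (by linarith))]
  congr 1
  ring

end InnerProductSpace

/-- **The Bell–Mermin model reproduces the Born rule.** For unit vectors φ, w ∈ ℝ³,
(1/(4π)) ∫_{S²} 1_{φ·(w+λ)>0}(λ) dσ(λ) = (1 + φ·w)/2.  With w = ψ this is the Born rule;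
with w = λ' it recovers the Beltrametti–Bugajski indicator function by marginalizing over
the hidden variable λ''. -/
theorem bellMermin_marginal (φ w : EuclideanSpace ℝ (Fin 3))
    (hφ : ‖φ‖ = 1) (hw : ‖w‖ = 1) :
    (1 / (4 * π)) * ∫ l : S2,
        Set.indicator {l : S2 | 0 < (inner ℝ φ (w + (l : EuclideanSpace ℝ (Fin 3))) : ℝ)}
          (fun _ => (1 : ℝ)) l ∂sphereMeasure
      = (1 + (inner ℝ φ w : ℝ)) / 2 := by
  obtain ⟨hlo, hhi⟩ : -1 ≤ inner ℝ φ w ∧ inner ℝ φ w ≤ 1 :=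
    abs_le.1 (by simpa [hφ, hw] using abs_real_inner_le_norm φ w)
  have hcap : {l : S2 | 0 < inner ℝ φ (w + (l : EuclideanSpace ℝ (Fin 3)))}
      = {l : S2 | -inner ℝ φ w < inner ℝ φ (l : EuclideanSpace ℝ (Fin 3))} := by
    simp only [inner_add_right, neg_lt_iff_pos_add']
  rw [hcap, integral_indicator_const _ (measurableSet_setOf_lt_inner φ _), smul_eq_mul, mul_one,
    measureReal_def, sphereMeasure,
    toSphere_setOf_lt_inner finrank_euclideanSpace_fin hφ (by linarith) (by linarith),
    ENNReal.toReal_ofReal (mul_nonneg two_pi_pos.le (by linarith))]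
  field_simp
  ring
end
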